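/- Let g : [0,1) → ℝ be a C¹ nonnegative function with g(0) = 0 satisfying g'(t) ≤ a g(t)/(1-t²) + b/(1-t²)² + g(t)² for all t, where a ≤ 1.6c, b ≤ 4.5c, and 6.1c ≤ 1 with c > 0. Then g(t) ≤ t/(1-t²) for all t ∈ [0,1). -/

import Mathlib

/-!
The barrier `B t = t / (1 - t²)` satisfies `B' = (1 + t²) / (1 - t²)²`, while the right-hand side of
the Riccati inequality evaluated at `g = B` equals `(a t + b + t²) / (1 - t²)²`. Since `a t + b < 1`
on `[0, 1)`, `g` crosses the barrier strictly slower than `B` rises wherever they meet, and the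
comparison theorem `image_le_of_deriv_right_lt_deriv_boundary'` keeps `g ≤ B` from `g 0 = B 0 = 0`.
-/

open Set

lemma one_sub_sq_pos {x : ℝ} (hx : x ∈ Ico (0 : ℝ) 1) : 0 < 1 - x ^ 2 := by
  nlinarith [hx.1, hx.2]

lemma hasDerivAt_div_one_sub_sq {x : ℝ} (hx : 1 - x ^ 2 ≠ 0) :
    HasDerivAt (fun x : ℝ => x / (1 - x ^ 2)) ((1 + x ^ 2) / (1 - x ^ 2) ^ 2) x := by
  refine ((hasDerivAt_id' x).div ((hasDerivAt_const x 1).sub (hasDerivAt_pow 2 x)) hx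
    |>.congr_deriv ?_)
  simp only [Pi.sub_apply, Nat.cast_ofNat, Nat.add_one_sub_one, pow_one]
  ring

lemma mul_add_lt_one_of_mem_Ico {a b x : ℝ} (hb : b < 1) (hab : a + b ≤ 1)
    (hx : x ∈ Ico (0 : ℝ) 1) : a * x + b < 1 := by
  have hconvex : a * x + b = (1 - x) * b + x * (a + b) := by ring
  nlinarith [hx.1, hx.2]

lemma riccati_rhs_at_div_one_sub_sq_lt {a b x : ℝ} (hb : b < 1) (hab : a + b ≤ 1)
    (hx : x ∈ Ico (0 : ℝ) 1) :
    a * (x / (1 - x ^ 2)) / (1 - x ^ 2) + b / (1 - x ^ 2) ^ 2 + (x / (1 - x ^ 2)) ^ 2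
      < (1 + x ^ 2) / (1 - x ^ 2) ^ 2 := by
  have hpos := one_sub_sq_pos hx
  calc a * (x / (1 - x ^ 2)) / (1 - x ^ 2) + b / (1 - x ^ 2) ^ 2 + (x / (1 - x ^ 2)) ^ 2
      = (a * x + b + x ^ 2) / (1 - x ^ 2) ^ 2 := by field_simp
    _ < (1 + x ^ 2) / (1 - x ^ 2) ^ 2 := by
      gcongr
      linarith [mul_add_lt_one_of_mem_Ico hb hab hx]

theorem le_div_one_sub_sq_of_riccati {a b : ℝ} (hb : b < 1) (hab : a + b ≤ 1) {g g' : ℝ → ℝ}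
    (hd : ∀ t ∈ Ico (0 : ℝ) 1, HasDerivAt g (g' t) t) (h0 : g 0 = 0)
    (hineq : ∀ t ∈ Ico (0 : ℝ) 1,
      g' t ≤ a * g t / (1 - t ^ 2) + b / (1 - t ^ 2) ^ 2 + g t ^ 2) :
    ∀ t ∈ Ico (0 : ℝ) 1, g t ≤ t / (1 - t ^ 2) := by
  intro t ht
  have hsub : Icc 0 t ⊆ Ico (0 : ℝ) 1 := fun x hx => ⟨hx.1, hx.2.trans_lt ht.2⟩
  have hsub' : Ico 0 t ⊆ Ico (0 : ℝ) 1 := Ico_subset_Icc_self.trans hsub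
  have hB : ∀ x ∈ Ico (0 : ℝ) 1,
      HasDerivAt (fun x : ℝ => x / (1 - x ^ 2)) ((1 + x ^ 2) / (1 - x ^ 2) ^ 2) x :=
    fun x hx => hasDerivAt_div_one_sub_sq (one_sub_sq_pos hx).ne'
  refine image_le_of_deriv_right_lt_deriv_boundary'
    (fun x hx => (hd x (hsub hx)).continuousAt.continuousWithinAt)
    (fun x hx => (hd x (hsub' hx)).hasDerivWithinAt) (by simp [h0])
    (fun x hx => (hB x (hsub hx)).continuousAt.continuousWithinAt)
    (fun x hx => (hB x (hsub' hx)).hasDerivWithinAt) ?_ ⟨ht.1, le_rfl⟩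
  intro x hx hgx
  have hx' := hsub' hx
  have hrhs := riccati_rhs_at_div_one_sub_sq_lt hb hab hx'
  rw [← hgx] at hrhs
  exact (hineq x hx').trans_lt hrhs

theorem stmt_10_general (c a b : ℝ) (hc : 0 < c) (hc' : 6.1 * c ≤ 1)
    (ha : a ≤ 1.6 * c) (hb : b ≤ 4.5 * c)
    (g g' : ℝ → ℝ)
    (hd : ∀ t ∈ Set.Ico (0 : ℝ) 1, HasDerivAt g (g' t) t)
    (h0 : g 0 = 0)
    (hineq : ∀ t ∈ Set.Ico (0 : ℝ) 1,
      g' t ≤ a * g t / (1 - t ^ 2) + b / (1 - t ^ 2) ^ 2 + g t ^ 2) :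
    ∀ t ∈ Set.Ico (0 : ℝ) 1, g t ≤ t / (1 - t ^ 2) :=
  le_div_one_sub_sq_of_riccati (by linarith) (by linarith) hd h0 hineq

theorem stmt_10 (c a b : ℝ) (hc : 0 < c) (hc' : 6.1 * c ≤ 1)
    (ha0 : 0 ≤ a) (hb0 : 0 ≤ b) (ha : a ≤ 1.6 * c) (hb : b ≤ 4.5 * c)
    (g g' : ℝ → ℝ)
    (hpos : ∀ t ∈ Set.Ico (0 : ℝ) 1, 0 ≤ g t)
    (hd : ∀ t ∈ Set.Ico (0 : ℝ) 1, HasDerivAt g (g' t) t)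
    (hcont : ContinuousOn g' (Set.Ico (0 : ℝ) 1))
    (h0 : g 0 = 0)
    (hineq : ∀ t ∈ Set.Ico (0 : ℝ) 1,
      g' t ≤ a * g t / (1 - t ^ 2) + b / (1 - t ^ 2) ^ 2 + g t ^ 2) :
    ∀ t ∈ Set.Ico (0 : ℝ) 1, g t ≤ t / (1 - t ^ 2) :=
  stmt_10_general c a b hc hc' ha hb g g' hd h0 hineq
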